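/- Let n ≥ 1 and consider the resonant weights λ = 0, μ = 1 (so δ = 1). Then for EVERY α ∈ ℝ, the map Q_α on first-order symbols defined by Q_α(P₁,P₀)f = P₁^i ∂_i f + α(∂_i P₁^i) f + P₀ f is equivariant with respect to all smooth vector fields on ℝⁿ: for every smooth vector field X, every first-order symbol (P₁,P₀), and every smooth f, Q_α(L_X^1(P₁,P₀)) f = L_X^1(Q_α(P₁,P₀) f) − Q_α(P₁,P₀)(L_X^0 f). -/

import Mathlib

open scoped BigOperators

noncomputable section

/-- Partial derivative of a function on `ℝⁿ` in the `i`-th coordinate direction. -/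
def pd {n : ℕ} (i : Fin n) (f : (Fin n → ℝ) → ℝ) : (Fin n → ℝ) → ℝ :=
  fun x => fderiv ℝ f x (Pi.single i 1)

/-- Diagonal entries of the flat metric of signature `(p, n−p)`. -/
def sgn (p : ℕ) {n : ℕ} (i : Fin n) : ℝ := if (i : ℕ) < p then 1 else -1

/-- Flat metric `g_{ij} = g^{ij} = diag(1,…,1,−1,…,−1)`. -/
def gmet (p : ℕ) {n : ℕ} (i j : Fin n) : ℝ := if i = j then sgn p i else 0

/-- Divergence of a vector field on `ℝⁿ`. -/
def divg {n : ℕ} (X : Fin n → (Fin n → ℝ) → ℝ) : (Fin n → ℝ) → ℝ :=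
  fun x => ∑ k, pd k (X k) x

/-- Lie derivative of a weight-`l` density (in the trivialization). -/
def lieF {n : ℕ} (X : Fin n → (Fin n → ℝ) → ℝ) (l : ℝ) (f : (Fin n → ℝ) → ℝ) :
    (Fin n → ℝ) → ℝ :=
  fun x => (∑ k, X k x * pd k f x) + l * divg X x * f x

/-- Weight-`d` action of a vector field on the degree-2 component of a symbol. -/
def lieS2 {n : ℕ} (X : Fin n → (Fin n → ℝ) → ℝ) (d : ℝ)
    (P2 : Fin n → Fin n → (Fin n → ℝ) → ℝ) : Fin n → Fin n → (Fin n → ℝ) → ℝ :=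
  fun i j x => (∑ k, X k x * pd k (P2 i j) x) - (∑ k, P2 k j x * pd k (X i) x)
    - (∑ k, P2 i k x * pd k (X j) x) + d * divg X x * P2 i j x

/-- Weight-`d` action of a vector field on the degree-1 component of a symbol. -/
def lieS1 {n : ℕ} (X : Fin n → (Fin n → ℝ) → ℝ) (d : ℝ)
    (P1 : Fin n → (Fin n → ℝ) → ℝ) : Fin n → (Fin n → ℝ) → ℝ :=
  fun i x => (∑ k, X k x * pd k (P1 i) x) - (∑ k, P1 k x * pd k (X i) x)
    + d * divg X x * P1 i x

/-- The second-order differential operator with coefficients `(A2, A1, A0)`. -/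
def op2 {n : ℕ} (A2 : Fin n → Fin n → (Fin n → ℝ) → ℝ) (A1 : Fin n → (Fin n → ℝ) → ℝ)
    (A0 : (Fin n → ℝ) → ℝ) (f : (Fin n → ℝ) → ℝ) : (Fin n → ℝ) → ℝ :=
  fun x => (∑ i, ∑ j, A2 i j x * pd i (pd j f) x) + (∑ i, A1 i x * pd i f x) + A0 x * f x

/-- The first-order quantization map
`Q_α(P₁,P₀) f = P₁^i ∂_i f + α (∂_i P₁^i) f + P₀ f`. -/
def Q1op {n : ℕ} (a : ℝ) (P1 : Fin n → (Fin n → ℝ) → ℝ) (P0 : (Fin n → ℝ) → ℝ)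
    (f : (Fin n → ℝ) → ℝ) : (Fin n → ℝ) → ℝ :=
  fun x => (∑ i, P1 i x * pd i f x) + a * (∑ i, pd i (P1 i) x) * f x + P0 x * f x

set_option linter.unusedVariables false

namespace PdH
variable {n : ℕ}

@[fun_prop] lemma contDiff_pd {f : (Fin n → ℝ) → ℝ} (hf : ContDiff ℝ (⊤ : ℕ∞) f) (i : Fin n) :
    ContDiff ℝ (⊤ : ℕ∞) (pd i f) := by
  have h : ContDiff ℝ (⊤ : ℕ∞) (fderiv ℝ f) := hf.fderiv_right (by simp)
  exact (ContinuousLinearMap.apply ℝ ℝ (Pi.single i 1)).contDiff.comp h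

@[fun_prop] lemma contDiff_fsum {ι : Type*} {E F : Type*} [NormedAddCommGroup E]
    [NormedSpace ℝ E] [NormedAddCommGroup F] [NormedSpace ℝ F] (s : Finset ι) (f : ι → E → F)
    (h : ∀ i, ContDiff ℝ (⊤ : ℕ∞) (f i)) : ContDiff ℝ (⊤ : ℕ∞) (fun x => ∑ i ∈ s, f i x) :=
  ContDiff.sum fun i _ => h i

lemma sda {g : (Fin n → ℝ) → ℝ} (h : ContDiff ℝ (⊤ : ℕ∞) g) (x : Fin n → ℝ) :
    DifferentiableAt ℝ g x := (h.differentiable (by simp)) x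

lemma pd_add {f g : (Fin n → ℝ) → ℝ} {x : Fin n → ℝ} (hf : DifferentiableAt ℝ f x)
    (hg : DifferentiableAt ℝ g x) (i : Fin n) :
    pd i (fun y => f y + g y) x = pd i f x + pd i g x := by
  simp [pd, fderiv_fun_add hf hg]

lemma pd_sub {f g : (Fin n → ℝ) → ℝ} {x : Fin n → ℝ} (hf : DifferentiableAt ℝ f x)
    (hg : DifferentiableAt ℝ g x) (i : Fin n) :
    pd i (fun y => f y - g y) x = pd i f x - pd i g x := by
  simp [pd, fderiv_fun_sub hf hg]

lemma pd_mul {f g : (Fin n → ℝ) → ℝ} {x : Fin n → ℝ} (hf : DifferentiableAt ℝ f x)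
    (hg : DifferentiableAt ℝ g x) (i : Fin n) :
    pd i (fun y => f y * g y) x = pd i f x * g x + f x * pd i g x := by
  simp [pd, fderiv_fun_mul hf hg]; ring

lemma pd_const_mul {g : (Fin n → ℝ) → ℝ} {x : Fin n → ℝ} (c : ℝ)
    (hg : DifferentiableAt ℝ g x) (i : Fin n) :
    pd i (fun y => c * g y) x = c * pd i g x := by
  simp [pd, fderiv_const_mul hg c]

lemma pd_sum {g : Fin n → (Fin n → ℝ) → ℝ} {x : Fin n → ℝ}
    (hg : ∀ k, DifferentiableAt ℝ (g k) x) (i : Fin n) :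
    pd i (fun y => ∑ k, g k y) x = ∑ k, pd i (g k) x := by
  simp [pd, fderiv_fun_sum (fun k _ => hg k)]

lemma pd_sum_mul {u v : Fin n → (Fin n → ℝ) → ℝ} (hu : ∀ k, ContDiff ℝ (⊤ : ℕ∞) (u k))
    (hv : ∀ k, ContDiff ℝ (⊤ : ℕ∞) (v k)) (i : Fin n) (x : Fin n → ℝ) :
    pd i (fun y => ∑ k, u k y * v k y) x
      = ∑ k, (pd i (u k) x * v k x + u k x * pd i (v k) x) := by
  rw [pd_sum fun k => sda ((hu k).mul (hv k)) x]
  exact Finset.sum_congr rfl fun k _ => pd_mul (sda (hu k) x) (sda (hv k) x) i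

lemma pd_comm {f : (Fin n → ℝ) → ℝ} (hf : ContDiff ℝ (⊤ : ℕ∞) f) (i j : Fin n) (x : Fin n → ℝ) :
    pd i (pd j f) x = pd j (pd i f) x := by
  have hd : ∀ y, HasFDerivAt f (fderiv ℝ f y) y := fun y =>
    (hf.differentiable (by simp) y).hasFDerivAt
  have hd2 : HasFDerivAt (fderiv ℝ f) (fderiv ℝ (fderiv ℝ f) x) x :=
    (((hf.fderiv_right (m := (⊤ : ℕ∞)) (by simp)).differentiable (by simp)) x).hasFDerivAt
  have key := second_derivative_symmetric hd hd2
  have heval : ∀ (v : Fin n → ℝ),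
      fderiv ℝ (fun z => fderiv ℝ f z v) x = (fderiv ℝ (fderiv ℝ f) x).flip v := by
    intro v
    have h := hd2.clm_apply (hasFDerivAt_const v x)
    simpa using h.fderiv
  show fderiv ℝ (fun z => fderiv ℝ f z (Pi.single j 1)) x (Pi.single i 1)
      = fderiv ℝ (fun z => fderiv ℝ f z (Pi.single i 1)) x (Pi.single j 1)
  rw [heval, heval]
  exact key _ _
end PdH

open PdH

/-- in the resonant case `(λ,μ) = (0,1)`, `δ = 1`, the map `Q_α`
is equivariant with respect to all smooth vector fields for EVERY `α ∈ ℝ`. -/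
theorem first_order_resonant_quantization_equivariant_for_all_alpha
    (n : ℕ) (hn : 1 ≤ n) (a : ℝ)
    (X : Fin n → (Fin n → ℝ) → ℝ) (hX : ∀ i, ContDiff ℝ (⊤ : ℕ∞) (X i))
    (P1 : Fin n → (Fin n → ℝ) → ℝ) (P0 : (Fin n → ℝ) → ℝ)
    (hP1 : ∀ i, ContDiff ℝ (⊤ : ℕ∞) (P1 i)) (hP0 : ContDiff ℝ (⊤ : ℕ∞) P0)
    (f : (Fin n → ℝ) → ℝ) (hf : ContDiff ℝ (⊤ : ℕ∞) f) (x : Fin n → ℝ) :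
    Q1op a (lieS1 X 1 P1) (lieF X 1 P0) f x
      = lieF X 1 (Q1op a P1 P0 f) x - Q1op a P1 P0 (lieF X 0 f) x := by
  have e1 : lieS1 X 1 P1 = fun i y => (∑ k, X k y * pd k (P1 i) y)
      - (∑ k, P1 k y * pd k (X i) y) + (∑ k, pd k (X k) y) * P1 i y := by
    funext i y; simp [lieS1, divg]
  have e2 : Q1op a P1 P0 f = fun y => (∑ i, P1 i y * pd i f y)
      + a * (∑ i, pd i (P1 i) y) * f y + P0 y * f y := by
    funext y; simp [Q1op]
  have e3 : lieF X 0 f = fun y => ∑ k, X k y * pd k f y := by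
    funext y; simp [lieF]
  rw [e2, e3]
  simp only [e1, Q1op, lieF, divg, zero_mul, add_zero, one_mul]
  -- pd of lieS1 body
  have hA : ∀ i, pd i (fun y => (∑ k, X k y * pd k (P1 i) y) - (∑ k, P1 k y * pd k (X i) y)
      + (∑ k, pd k (X k) y) * P1 i y) x
      = (∑ k, (pd i (X k) x * pd k (P1 i) x + X k x * pd i (pd k (P1 i)) x))
        - (∑ k, (pd i (P1 k) x * pd k (X i) x + P1 k x * pd i (pd k (X i)) x))
        + ((∑ k, pd i (pd k (X k)) x) * P1 i x + (∑ k, pd k (X k) x) * pd i (P1 i) x) := by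
    intro i
    rw [pd_add (sda (by fun_prop (disch := first | apply hX | apply hP1)) x)
        (sda (by fun_prop (disch := first | apply hX | apply hP1)) x),
      pd_sub (sda (by fun_prop (disch := first | apply hX | apply hP1)) x)
        (sda (by fun_prop (disch := first | apply hX | apply hP1)) x),
      pd_sum_mul hX (fun k => contDiff_pd (hP1 i) k),
      pd_sum_mul hP1 (fun k => contDiff_pd (hX i) k),
      pd_mul (sda (by fun_prop (disch := first | apply hX | apply hP1)) x)
        (sda (hP1 i) x),
      pd_sum (fun k => sda (contDiff_pd (hX k) k) x)]
  have hB : ∀ k, pd k (fun y => (∑ i, P1 i y * pd i f y) + a * (∑ i, pd i (P1 i) y) * f y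
      + P0 y * f y) x
      = (∑ i, (pd k (P1 i) x * pd i f x + P1 i x * pd k (pd i f) x))
        + ((a * (∑ i, pd k (pd i (P1 i)) x)) * f x + (a * (∑ i, pd i (P1 i) x)) * pd k f x)
        + (pd k P0 x * f x + P0 x * pd k f x) := by
    intro k
    rw [pd_add (sda (by fun_prop (disch := first | apply hP1 | exact hP0 | exact hf)) x)
        (sda (by fun_prop (disch := first | apply hP1 | exact hP0 | exact hf)) x),
      pd_add (sda (by fun_prop (disch := first | apply hP1 | exact hf)) x)
        (sda (by fun_prop (disch := first | apply hP1 | exact hf)) x),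
      pd_sum_mul hP1 (fun i => contDiff_pd hf i),
      pd_mul (sda (by fun_prop (disch := first | apply hP1)) x) (sda hf x),
      pd_const_mul a (sda (by fun_prop (disch := first | apply hP1)) x) k,
      pd_sum (fun i => sda (contDiff_pd (hP1 i) i) x),
      pd_mul (sda hP0 x) (sda hf x)]
  have hC : ∀ i, pd i (fun y => ∑ k, X k y * pd k f y) x
      = ∑ k, (pd i (X k) x * pd k f x + X k x * pd i (pd k f) x) :=
    fun i => pd_sum_mul hX (fun k => contDiff_pd hf k) i x
  simp only [hA, hB, hC]
  simp only [Finset.sum_add_distrib, Finset.sum_sub_distrib, Finset.mul_sum, Finset.sum_mul,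
    mul_add, add_mul, sub_mul, mul_sub]
  ring_nf
  have J1 : ∑ i : Fin n, ∑ k : Fin n, X i x * pd i (P1 k) x * pd k f x
      = ∑ i : Fin n, ∑ k : Fin n, X k x * pd k (P1 i) x * pd i f x := Finset.sum_comm
  have J2 : ∑ i : Fin n, ∑ k : Fin n, P1 i x * pd i (X k) x * pd k f x
      = ∑ i : Fin n, ∑ k : Fin n, P1 k x * pd k (X i) x * pd i f x := Finset.sum_comm
  have J3 : ∑ i : Fin n, ∑ k : Fin n, a * pd i (X k) x * pd k (P1 i) x * f x
      = ∑ i : Fin n, ∑ k : Fin n, a * pd i (P1 k) x * pd k (X i) x * f x := by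
    rw [Finset.sum_comm]
    exact Finset.sum_congr rfl fun i _ => Finset.sum_congr rfl fun k _ => by ring
  have J4 : ∑ i : Fin n, ∑ k : Fin n, a * f x * X k x * pd i (pd k (P1 i)) x
      = ∑ i : Fin n, ∑ k : Fin n, X i x * a * pd i (pd k (P1 k)) x * f x := by
    rw [Finset.sum_comm]
    refine Finset.sum_congr rfl fun i _ => Finset.sum_congr rfl fun k _ => ?_
    rw [pd_comm (hP1 k) i k x]; ring
  have J5 : ∑ i : Fin n, ∑ k : Fin n, a * f x * P1 k x * pd i (pd k (X i)) x
      = ∑ i : Fin n, ∑ k : Fin n, a * pd i (pd k (X k)) x * P1 i x * f x := by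
    rw [Finset.sum_comm]
    refine Finset.sum_congr rfl fun i _ => Finset.sum_congr rfl fun k _ => ?_
    rw [pd_comm (hX k) i k x]; ring
  have J6 : ∑ i : Fin n, ∑ k : Fin n, X i x * P1 k x * pd i (pd k f) x
      = ∑ i : Fin n, ∑ k : Fin n, P1 i x * X k x * pd i (pd k f) x := by
    rw [Finset.sum_comm]
    refine Finset.sum_congr rfl fun i _ => Finset.sum_congr rfl fun k _ => ?_
    rw [pd_comm hf i k x]; ring
  rw [J1, J2, J3, J4, J5, J6]
  simp only [mul_comm, mul_left_comm, mul_assoc]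
  ring
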